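/- arXiv:2312.01411 — 6 statements merged into one kernel-verified Lean document; each statement's English description precedes it below -/
import Mathlib

section
/- Let X_1*, ..., X_M* be vectors in R^p satisfying the norm-recoverability condition: there exists c_1 > 0 such that (1/M) * sum_{i=1}^M |<X_i*, beta>| >= c_1 * ||beta||_2 for all beta in R^p. Let Y_1*, ..., Y_M* > 0 and h_0^+ > 0 and tau > 0. Then the function pi(beta) = prod_{i=1}^M [ exp(<X_i*,beta>) * h_0^+ * exp( - exp(<X_i*,beta>) * Y_i* * h_0^+ ) ]^{tau/M} is integrable over R^p, i.e. the Cox catalytic prior is proper. -/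
open MeasureTheory Real
open scoped RealInnerProductSpace BigOperators

/-- `x ^ n / n! ≤ exp x` for nonnegative `x`. -/
lemma pow_div_factorial_le_exp {x : ℝ} (hx : 0 ≤ x) (n : ℕ) :
    x ^ n / n.factorial ≤ Real.exp x := by
  calc x ^ n / n.factorial
      ≤ ∑ i ∈ Finset.range (n + 1), x ^ i / i.factorial := by
        refine Finset.single_le_sum (f := fun i => x ^ i / (i.factorial : ℝ))
          (fun i _ => by positivity) (Finset.self_mem_range_succ n)
    _ ≤ Real.exp x := Real.sum_le_exp_of_nonneg hx _

/-- Key pointwise bound: `t - a * exp t ≤ -|t| + 2 / a` for `a > 0`. -/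
lemma key_bound {a : ℝ} (ha : 0 < a) (t : ℝ) : t - a * Real.exp t ≤ -|t| + 2 / a := by
  rcases le_or_gt t 0 with ht | ht
  · have h1 : 0 < a * Real.exp t := by positivity
    have h2 : 0 < 2 / a := by positivity
    rw [abs_of_nonpos ht]
    linarith
  · have h1 : t ^ 2 / 2 ≤ Real.exp t := by
      have := pow_div_factorial_le_exp ht.le 2
      norm_num [Nat.factorial] at this
      linarith
    rw [abs_of_pos ht]
    have h3 : 2 * t - a * (t ^ 2 / 2) ≤ 2 / a := by
      rw [le_div_iff₀ ha]
      nlinarith [sq_nonneg (a * t - 2)]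
    nlinarith

/-- `exp (-(a * ‖x‖))` is integrable on a finite-dimensional Euclidean space. -/
lemma integrable_exp_neg_mul_norm {p : ℕ} {a : ℝ} (ha : 0 < a) :
    MeasureTheory.Integrable
      (fun x : EuclideanSpace ℝ (Fin p) => Real.exp (-(a * ‖x‖))) := by
  set n : ℕ := p + 1 with hn
  have hfr : (Module.finrank ℝ (EuclideanSpace ℝ (Fin p)) : ℝ) < (n : ℝ) := by
    simp [hn, finrank_euclideanSpace]
  have hint := (integrable_one_add_norm
    (E := EuclideanSpace ℝ (Fin p)) (μ := volume) (r := (n : ℝ)) hfr).const_mul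
      ((n.factorial : ℝ) * Real.exp a / a ^ n)
  refine hint.mono' ?_ (Filter.Eventually.of_forall fun x => ?_)
  · exact (Real.continuous_exp.comp
      ((continuous_const.mul continuous_norm).neg)).aestronglyMeasurable
  · have hx : (0:ℝ) < 1 + ‖x‖ := by positivity
    have hkey : (a * (1 + ‖x‖)) ^ n / n.factorial ≤ Real.exp (a * (1 + ‖x‖)) :=
      pow_div_factorial_le_exp (by positivity) n
    have hexp : Real.exp (a * (1 + ‖x‖)) = Real.exp a * Real.exp (a * ‖x‖) := by
      rw [← Real.exp_add]; ring_nf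
    rw [Real.norm_eq_abs, abs_of_nonneg (Real.exp_pos _).le]
    have hrpow : ((1:ℝ) + ‖x‖) ^ (-(n:ℝ)) = ((1 + ‖x‖) ^ n)⁻¹ := by
      rw [Real.rpow_neg hx.le, Real.rpow_natCast]
    have h3 : a ^ n * (1 + ‖x‖) ^ n ≤ n.factorial * Real.exp a * Real.exp (a * ‖x‖) := by
      calc a ^ n * (1 + ‖x‖) ^ n = (a * (1 + ‖x‖)) ^ n := (mul_pow _ _ _).symm
        _ ≤ n.factorial * Real.exp (a * (1 + ‖x‖)) := by
            rw [div_le_iff₀ (by positivity)] at hkey; linarith [hkey]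
        _ = n.factorial * Real.exp a * Real.exp (a * ‖x‖) := by rw [hexp]; ring
    rw [hrpow, Real.exp_neg]
    have heq : (n.factorial : ℝ) * Real.exp a / a ^ n * ((1 + ‖x‖) ^ n)⁻¹
        = (n.factorial : ℝ) * Real.exp a / (a ^ n * (1 + ‖x‖) ^ n) := by
      field_simp
    rw [heq, inv_eq_one_div, div_le_div_iff₀ (Real.exp_pos _) (by positivity)]
    nlinarith [h3, (Real.exp_pos (a * ‖x‖)).le]

/-- Properness of the Cox catalytic prior: under norm-recoverability of the synthetic
covariates, the Cox catalytic prior density is integrable over ℝ^p. -/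
theorem cox_catalytic_prior_proper (p M : ℕ) (hM : 0 < M)
    (X : Fin M → EuclideanSpace ℝ (Fin p)) (Y : Fin M → ℝ) (hY : ∀ i, 0 < Y i)
    (h0 τ c1 : ℝ) (hh0 : 0 < h0) (hτ : 0 < τ) (hc1 : 0 < c1)
    (hnr : ∀ β : EuclideanSpace ℝ (Fin p),
      c1 * ‖β‖ ≤ (1 / (M : ℝ)) * ∑ i, |⟪X i, β⟫|) :
    MeasureTheory.Integrable (fun β : EuclideanSpace ℝ (Fin p) =>
      ∏ i, (Real.exp ⟪X i, β⟫ * h0 *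
        Real.exp (-(Real.exp ⟪X i, β⟫ * Y i * h0))) ^ (τ / (M : ℝ))) := by
  have hM' : (0:ℝ) < M := Nat.cast_pos.mpr hM
  have hτM : 0 < τ / (M:ℝ) := div_pos hτ hM'
  -- constant
  set K : ℝ := ∏ i, (h0 * Real.exp (2 / (Y i * h0))) ^ (τ / (M:ℝ)) with hK
  have hKpos : 0 < K := Finset.prod_pos fun i _ => Real.rpow_pos_of_pos (by positivity) _
  have hdom := (integrable_exp_neg_mul_norm (p := p) (a := τ * c1)
    (by positivity)).const_mul K
  refine hdom.mono' ?_ (Filter.Eventually.of_forall fun β => ?_)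
  · -- continuity
    refine Continuous.aestronglyMeasurable ?_
    refine continuous_finset_prod _ fun i _ => ?_
    have hinner : Continuous fun β : EuclideanSpace ℝ (Fin p) => ⟪X i, β⟫ :=
      Continuous.inner continuous_const continuous_id
    refine Continuous.rpow_const ?_ fun x => Or.inr hτM.le
    exact ((Real.continuous_exp.comp hinner).mul continuous_const).mul
      (Real.continuous_exp.comp
        (((Real.continuous_exp.comp hinner).mul continuous_const).mul continuous_const).neg)
  · -- the bound
    set t : Fin M → ℝ := fun i => ⟪X i, β⟫ with ht
    have hfac : ∀ i, (0:ℝ) ≤ Real.exp (t i) * h0 *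
        Real.exp (-(Real.exp (t i) * Y i * h0)) := fun i => by positivity
    rw [Real.norm_eq_abs, abs_of_nonneg (Finset.prod_nonneg fun i _ =>
      Real.rpow_nonneg (hfac i) _)]
    have hstep : ∀ i, Real.exp (t i) * h0 * Real.exp (-(Real.exp (t i) * Y i * h0))
        ≤ h0 * Real.exp (2 / (Y i * h0)) * Real.exp (-|t i|) := by
      intro i
      have ha : 0 < Y i * h0 := mul_pos (hY i) hh0
      have := key_bound ha (t i)
      have h1 : Real.exp (t i) * Real.exp (-(Real.exp (t i) * Y i * h0))
          = Real.exp (t i - (Y i * h0) * Real.exp (t i)) := by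
        rw [← Real.exp_add]; ring_nf
      have h2 : Real.exp (t i - (Y i * h0) * Real.exp (t i))
          ≤ Real.exp (-|t i| + 2 / (Y i * h0)) := Real.exp_le_exp.mpr this
      calc Real.exp (t i) * h0 * Real.exp (-(Real.exp (t i) * Y i * h0))
          = h0 * (Real.exp (t i) * Real.exp (-(Real.exp (t i) * Y i * h0))) := by ring
        _ ≤ h0 * Real.exp (-|t i| + 2 / (Y i * h0)) := by
            rw [h1]; exact mul_le_mul_of_nonneg_left h2 hh0.le
        _ = h0 * Real.exp (2 / (Y i * h0)) * Real.exp (-|t i|) := by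
            rw [Real.exp_add]; ring
    have hprod : ∏ i, (Real.exp (t i) * h0 * Real.exp (-(Real.exp (t i) * Y i * h0)))
          ^ (τ / (M:ℝ))
        ≤ ∏ i, (h0 * Real.exp (2 / (Y i * h0)) * Real.exp (-|t i|)) ^ (τ / (M:ℝ)) :=
      Finset.prod_le_prod (fun i _ => Real.rpow_nonneg (hfac i) _)
        (fun i _ => Real.rpow_le_rpow (hfac i) (hstep i) hτM.le)
    have hsplit : ∏ i, (h0 * Real.exp (2 / (Y i * h0)) * Real.exp (-|t i|)) ^ (τ / (M:ℝ))
        = K * Real.exp (-(τ / (M:ℝ)) * ∑ i, |t i|) := by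
      have hBr : ∀ i : Fin M, (Real.exp (-|t i|)) ^ (τ / (M:ℝ))
          = Real.exp (-(τ / (M:ℝ)) * |t i|) := fun i => by
        rw [Real.rpow_def_of_pos (Real.exp_pos _), Real.log_exp]; ring_nf
      have hterm : ∀ i ∈ Finset.univ,
          (h0 * Real.exp (2 / (Y i * h0)) * Real.exp (-|t i|)) ^ (τ / (M:ℝ))
          = (h0 * Real.exp (2 / (Y i * h0))) ^ (τ / (M:ℝ))
            * Real.exp (-(τ / (M:ℝ)) * |t i|) := fun i _ => by
        rw [Real.mul_rpow (by positivity) (Real.exp_pos _).le, hBr i]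
      rw [Finset.prod_congr rfl hterm, Finset.prod_mul_distrib, hK]
      congr 1
      rw [← Real.exp_sum]
      congr 1
      rw [Finset.mul_sum]
    have hsum : τ * c1 * ‖β‖ ≤ (τ / (M:ℝ)) * ∑ i, |t i| := by
      have := hnr β
      calc τ * c1 * ‖β‖ = τ * (c1 * ‖β‖) := by ring
        _ ≤ τ * ((1 / (M:ℝ)) * ∑ i, |⟪X i, β⟫|) := mul_le_mul_of_nonneg_left this hτ.le
        _ = (τ / (M:ℝ)) * ∑ i, |t i| := by rw [ht]; ring
    calc ∏ i, (Real.exp ⟪X i, β⟫ * h0 *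
          Real.exp (-(Real.exp ⟪X i, β⟫ * Y i * h0))) ^ (τ / (M:ℝ))
        ≤ ∏ i, (h0 * Real.exp (2 / (Y i * h0)) * Real.exp (-|t i|)) ^ (τ / (M:ℝ)) := hprod
      _ = K * Real.exp (-(τ / (M:ℝ)) * ∑ i, |t i|) := hsplit
      _ ≤ K * Real.exp (-(τ * c1 * ‖β‖)) := by
          refine mul_le_mul_of_nonneg_left (Real.exp_le_exp.mpr ?_) hKpos.le
          rw [neg_mul]; exact neg_le_neg hsum
end

section
/- Let kappa = sup_{beta in R^p} (1/M) * sum_{i=1}^M [ log h_0^+ + <X_i*, beta> - exp(<X_i*, beta>) * Y_i* * h_0^+ ] be the supremum of the normalized synthetic log-likelihood. Then kappa is finite, provided the synthetic covariates satisfy the norm-recoverability condition. -/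
open Real
open scoped RealInnerProductSpace BigOperators

lemma key_bound_s3 (t c : ℝ) (hc : 0 < c) : t - Real.exp t * c ≤ -Real.log c - 1 := by
  have h := Real.add_one_le_exp (t + Real.log c)
  rw [Real.exp_add, Real.exp_log hc] at h
  linarith

/-- Finiteness of `κ`: under norm-recoverability, the normalized synthetic log-likelihood
`β ↦ (1/M) ∑ᵢ [log h₀⁺ + ⟪Xᵢ*,β⟫ - exp(⟪Xᵢ*,β⟫) Yᵢ* h₀⁺]` is bounded above, so its
supremum `κ` is finite. -/
theorem kappa_finite (p M : ℕ) (hM : 0 < M)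
    (X : Fin M → EuclideanSpace ℝ (Fin p)) (Y : Fin M → ℝ) (hY : ∀ i, 0 < Y i)
    (h0 : ℝ) (hh0 : 0 < h0) (c1 : ℝ) (hc1 : 0 < c1)
    (hnr : ∀ β : EuclideanSpace ℝ (Fin p),
      c1 * ‖β‖ ≤ (1 / (M : ℝ)) * ∑ i, |⟪X i, β⟫|) :
    BddAbove (Set.range (fun β : EuclideanSpace ℝ (Fin p) =>
      (1 / (M : ℝ)) * ∑ i, (Real.log h0 + ⟪X i, β⟫ - Real.exp ⟪X i, β⟫ * Y i * h0))) := by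
  refine ⟨(1 / (M : ℝ)) * ∑ i, (Real.log h0 + (-Real.log (Y i * h0) - 1)), ?_⟩
  rintro _ ⟨β, rfl⟩
  have hinv : (0 : ℝ) ≤ 1 / (M : ℝ) := by positivity
  refine mul_le_mul_of_nonneg_left (Finset.sum_le_sum fun i _ => ?_) hinv
  have hc : 0 < Y i * h0 := mul_pos (hY i) hh0
  have := key_bound_s3 ⟪X i, β⟫ (Y i * h0) hc
  have : ⟪X i, β⟫ - Real.exp ⟪X i, β⟫ * Y i * h0 ≤ -Real.log (Y i * h0) - 1 := by
    nlinarith [this]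
  linarith
end

section
/- Suppose the synthetic covariates satisfy norm-recoverability. Define ell(beta) = (1/M) sum_{i=1}^M [log h_0^+ + <X_i*, beta> - exp(<X_i*, beta>) Y_i* h_0^+] and kappa = sup_beta ell(beta) (finite). For alpha, gamma > 0, the Cox adaptive catalytic prior pi(tau, beta) proportional to tau^{p+alpha-1} e^{-tau(kappa + 1/gamma)} e^{tau * ell(beta)} is proper: the double integral over tau in (0, infinity) and beta in R^p is finite. -/
/-!
Since `t - eᵗ y ≤ -|t| + 4 / y` for `y > 0`, norm-recoverability makes the Cox log-likelihood
coercive: `ℓ β ≤ A - c₁ ‖β‖`. So `κ` is finite, and interpolating between `ℓ ≤ κ` and the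
coercive bound gives `ℓ β - κ - 1/γ ≤ -ε (1 + ‖β‖)` for some `ε > 0`. The density is then
dominated by `τ^(a-1) e^(-ε (1 + ‖β‖) τ)` with `a = p + α`, whose `τ`-integral
`Γ(a) ε^(-a) (1 + ‖β‖)^(-a)` is integrable on `ℝ^p` precisely because `a > p`.
-/

open MeasureTheory Real Set Module
open scoped RealInnerProductSpace BigOperators

lemma sub_exp_mul_le_neg_abs_add_div {y : ℝ} (hy : 0 < y) (t : ℝ) :
    t - exp t * y ≤ -|t| + 4 / y := by
  rcases le_or_gt 0 t with ht | ht
  · rw [abs_of_nonneg ht]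
    -- `y²eᵗ + 4 ≥ y²(t/2 + 1)² + 4 = (y(t/2 + 1) - 2)² + 2ty + 4y`
    have hsq : (t / 2 + 1) ^ 2 ≤ exp t := by
      rw [show exp t = exp (t / 2) ^ 2 by rw [← exp_nat_mul]; ring_nf]
      gcongr
      exact add_one_le_exp _
    rw [← sub_nonneg, show -t + 4 / y - (t - exp t * y) = (y ^ 2 * exp t + 4 - 2 * t * y) / y by
      field_simp; ring]
    apply div_nonneg _ hy.le
    nlinarith [sq_nonneg (y * (t / 2 + 1) - 2), mul_le_mul_of_nonneg_left hsq (sq_nonneg y)]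
  · rw [abs_of_neg ht]
    have : 0 < exp t * y := by positivity
    have : 0 < 4 / y := by positivity
    linarith

lemma cox_logLik_le_sub_mul_norm {E : Type*} [NormedAddCommGroup E] [InnerProductSpace ℝ E]
    {M : ℕ} (X : Fin M → E) {Y : Fin M → ℝ} (hY : ∀ i, 0 < Y i) {h0 : ℝ} (hh0 : 0 < h0)
    {c : ℝ} (hnr : ∀ β : E, c * ‖β‖ ≤ (1 / (M : ℝ)) * ∑ i, |⟪X i, β⟫|) (β : E) :
    (1 / (M : ℝ)) * ∑ i, (log h0 + ⟪X i, β⟫ - exp ⟪X i, β⟫ * Y i * h0) ≤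
      (1 / (M : ℝ)) * ∑ i, (log h0 + 4 / (Y i * h0)) - c * ‖β‖ := by
  calc (1 / (M : ℝ)) * ∑ i, (log h0 + ⟪X i, β⟫ - exp ⟪X i, β⟫ * Y i * h0)
      ≤ (1 / (M : ℝ)) * ∑ i, (log h0 + 4 / (Y i * h0) - |⟪X i, β⟫|) := by
        refine mul_le_mul_of_nonneg_left (Finset.sum_le_sum fun i _ => ?_) (by positivity)
        rw [mul_assoc]
        linarith [sub_exp_mul_le_neg_abs_add_div (mul_pos (hY i) hh0) ⟪X i, β⟫]
    _ = (1 / (M : ℝ)) * ∑ i, (log h0 + 4 / (Y i * h0)) - (1 / (M : ℝ)) * ∑ i, |⟪X i, β⟫| := by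
        rw [Finset.sum_sub_distrib, mul_sub]
    _ ≤ _ := by linarith [hnr β]

lemma exists_pos_sub_le_neg_mul_one_add_norm {E : Type*} [SeminormedAddGroup E] {ℓ : E → ℝ}
    {κ A c δ : ℝ} (hc : 0 < c) (hδ : 0 < δ) (hκ : ∀ β, ℓ β ≤ κ) (hA : ∀ β, ℓ β ≤ A - c * ‖β‖) :
    ∃ ε > 0, ∀ β, ℓ β - (κ + δ) ≤ -(ε * (1 + ‖β‖)) := by
  set D := max (A - κ) 0
  have hD : 0 ≤ D := le_max_right _ _
  -- `ℓ - κ ≤ min 0 (D - c‖β‖) ≤ θ (D - c‖β‖)`, with the weight `θ` chosen so that `θ D ≤ δ / 2`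
  set θ := δ / (δ + 2 * D)
  have hθ : 0 < θ := by positivity
  have hθ1 : θ ≤ 1 := (div_le_one (by positivity)).2 (by linarith)
  have hθD : θ * D ≤ δ / 2 := by
    rw [div_mul_eq_mul_div, div_le_iff₀ (by positivity)]; nlinarith
  refine ⟨min (δ / 2) (θ * c), by positivity, fun β => ?_⟩
  have hcomb : ℓ β - κ ≤ θ * (D - c * ‖β‖) := by
    have hcoercive : ℓ β - κ ≤ D - c * ‖β‖ := by linarith [hA β, le_max_left (A - κ) 0]
    nlinarith [hκ β]
  have hε_le : min (δ / 2) (θ * c) ≤ δ / 2 := min_le_left _ _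
  have hε_norm : min (δ / 2) (θ * c) * ‖β‖ ≤ θ * c * ‖β‖ :=
    mul_le_mul_of_nonneg_right (min_le_right _ _) (norm_nonneg β)
  nlinarith

lemma integrableOn_rpow_mul_exp_neg_mul_Ioi {a r : ℝ} (ha : 0 < a) (hr : 0 < r) :
    IntegrableOn (fun t : ℝ => t ^ (a - 1) * exp (-(r * t))) (Ioi 0) := by
  simpa [rpow_one] using integrableOn_rpow_mul_exp_neg_mul_rpow (p := 1) (by linarith) one_pos hr

section FiniteDimensional

variable {E : Type*} [NormedAddCommGroup E] [NormedSpace ℝ E] [FiniteDimensional ℝ E]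
  [MeasurableSpace E] [BorelSpace E] {μ : Measure E} [μ.IsAddHaarMeasure]

lemma integrable_rpow_mul_exp_neg_mul_one_add_norm {a ε : ℝ} (ha : (finrank ℝ E : ℝ) < a)
    (hε : 0 < ε) :
    Integrable (fun q : ℝ × E => q.1 ^ (a - 1) * exp (-(ε * (1 + ‖q.2‖) * q.1)))
      ((volume.restrict (Ioi 0)).prod μ) := by
  have ha0 : 0 < a := (finrank ℝ E).cast_nonneg.trans_lt ha
  rw [integrable_prod_iff' (by fun_prop)]
  refine ⟨ae_of_all _ fun β =>
    integrableOn_rpow_mul_exp_neg_mul_Ioi (r := ε * (1 + ‖β‖)) ha0 (by positivity), ?_⟩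
  have hinner : ∀ β : E, ∫ t in Ioi 0, ‖t ^ (a - 1) * exp (-(ε * (1 + ‖β‖) * t))‖ =
      (1 / ε) ^ a * Gamma a * (1 + ‖β‖) ^ (-a) := fun β => by
    rw [setIntegral_congr_fun measurableSet_Ioi fun t (ht : 0 < t) =>
      norm_of_nonneg (by positivity), integral_rpow_mul_exp_neg_mul_Ioi ha0 (by positivity),
      one_div, mul_inv, mul_rpow (by positivity) (by positivity),
      inv_rpow (x := 1 + ‖β‖) (by positivity), ← rpow_neg (by positivity), one_div]
    ring
  simp_rw [hinner]
  exact (integrable_one_add_norm ha).const_mul _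

/-- With `a = p + α` and `δ = 1/γ`, `τ^(a-1) e^(-τ(κ+δ))` is the paper's `Γ_{α,γ}(τ)` and
`e^(τ ℓ(β))` is `L(β, h₀⁺ | synthetic data)^(τ/M)`. -/
noncomputable def adaptiveCatalyticDensity (ℓ : E → ℝ) (κ a δ : ℝ) (q : ℝ × E) : ℝ :=
  q.1 ^ (a - 1) * exp (-q.1 * (κ + δ)) * exp (q.1 * ℓ q.2)

theorem integrableOn_adaptiveCatalyticDensity {ℓ : E → ℝ} (hℓ : Measurable ℓ) {κ A c a δ : ℝ}
    (hκ : ∀ β, ℓ β ≤ κ) (hA : ∀ β, ℓ β ≤ A - c * ‖β‖) (hc : 0 < c)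
    (ha : (finrank ℝ E : ℝ) < a) (hδ : 0 < δ) :
    IntegrableOn (adaptiveCatalyticDensity ℓ κ a δ) (Ioi 0 ×ˢ univ) (volume.prod μ) := by
  obtain ⟨ε, hε, hdecay⟩ := exists_pos_sub_le_neg_mul_one_add_norm hc hδ hκ hA
  have hdom : IntegrableOn (fun q : ℝ × E => q.1 ^ (a - 1) * exp (-(ε * (1 + ‖q.2‖) * q.1)))
      (Ioi 0 ×ˢ univ) (volume.prod μ) := by
    rw [IntegrableOn, ← Measure.prod_restrict, Measure.restrict_univ]
    exact integrable_rpow_mul_exp_neg_mul_one_add_norm ha hε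
  refine hdom.mono' (Measurable.aestronglyMeasurable ?_) ?_
  · unfold adaptiveCatalyticDensity
    fun_prop
  filter_upwards [self_mem_ae_restrict (measurableSet_Ioi.prod MeasurableSet.univ)]
    with ⟨τ, β⟩ hq
  have hτ : 0 < τ := hq.1
  calc ‖adaptiveCatalyticDensity ℓ κ a δ (τ, β)‖
      = τ ^ (a - 1) * exp (τ * (ℓ β - (κ + δ))) := by
        rw [adaptiveCatalyticDensity, mul_assoc, ← exp_add, norm_of_nonneg (by positivity)]
        ring_nf
    _ ≤ τ ^ (a - 1) * exp (-(ε * (1 + ‖β‖) * τ)) := by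
        gcongr
        nlinarith [hdecay β]

end FiniteDimensional

theorem cox_adaptive_catalytic_prior_proper_general (p M : ℕ)
    (X : Fin M → EuclideanSpace ℝ (Fin p)) (Y : Fin M → ℝ) (hY : ∀ i, 0 < Y i)
    (h0 α γ c1 : ℝ) (hh0 : 0 < h0) (hα : 0 < α) (hγ : 0 < γ) (hc1 : 0 < c1)
    (hnr : ∀ β : EuclideanSpace ℝ (Fin p),
      c1 * ‖β‖ ≤ (1 / (M : ℝ)) * ∑ i, |⟪X i, β⟫|)
    (ℓ : EuclideanSpace ℝ (Fin p) → ℝ)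
    (hℓ : ∀ β, ℓ β =
      (1 / (M : ℝ)) * ∑ i, (Real.log h0 + ⟪X i, β⟫ - Real.exp ⟪X i, β⟫ * Y i * h0))
    (κ : ℝ) (hκ : κ = ⨆ β : EuclideanSpace ℝ (Fin p), ℓ β) :
    MeasureTheory.IntegrableOn
      (fun q : ℝ × EuclideanSpace ℝ (Fin p) =>
        q.1 ^ ((p : ℝ) + α - 1) * Real.exp (-q.1 * (κ + 1 / γ)) * Real.exp (q.1 * ℓ q.2))
      (Set.Ioi (0 : ℝ) ×ˢ (Set.univ : Set (EuclideanSpace ℝ (Fin p)))) := by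
  set A := (1 / (M : ℝ)) * ∑ i, (log h0 + 4 / (Y i * h0))
  have hcoercive : ∀ β, ℓ β ≤ A - c1 * ‖β‖ := fun β =>
    (hℓ β).trans_le (cox_logLik_le_sub_mul_norm X hY hh0 hnr β)
  have hbdd : BddAbove (range ℓ) := ⟨A, by
    rintro _ ⟨β, rfl⟩
    linarith [hcoercive β, mul_nonneg hc1.le (norm_nonneg β)]⟩
  have hκ_ge : ∀ β, ℓ β ≤ κ := fun β => hκ ▸ le_ciSup hbdd β
  have hmeas : Measurable ℓ := by
    rw [funext hℓ]
    fun_prop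
  exact integrableOn_adaptiveCatalyticDensity hmeas hκ_ge hcoercive hc1
    (by simpa using hα) (one_div_pos.2 hγ)

/-- Properness of the Cox adaptive catalytic prior: the joint (unnormalized) density
`π(τ,β) ∝ τ^{p+α-1} e^{-τ(κ+1/γ)} e^{τ ℓ(β)}` is integrable over `(0,∞) × ℝ^p`. -/
theorem cox_adaptive_catalytic_prior_proper (p M : ℕ) (hM : 0 < M)
    (X : Fin M → EuclideanSpace ℝ (Fin p)) (Y : Fin M → ℝ) (hY : ∀ i, 0 < Y i)
    (h0 α γ c1 : ℝ) (hh0 : 0 < h0) (hα : 0 < α) (hγ : 0 < γ) (hc1 : 0 < c1)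
    (hnr : ∀ β : EuclideanSpace ℝ (Fin p),
      c1 * ‖β‖ ≤ (1 / (M : ℝ)) * ∑ i, |⟪X i, β⟫|)
    (ℓ : EuclideanSpace ℝ (Fin p) → ℝ)
    (hℓ : ∀ β, ℓ β =
      (1 / (M : ℝ)) * ∑ i, (Real.log h0 + ⟪X i, β⟫ - Real.exp ⟪X i, β⟫ * Y i * h0))
    (κ : ℝ) (hκ : κ = ⨆ β : EuclideanSpace ℝ (Fin p), ℓ β) :
    MeasureTheory.IntegrableOn
      (fun q : ℝ × EuclideanSpace ℝ (Fin p) =>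
        q.1 ^ ((p : ℝ) + α - 1) * Real.exp (-q.1 * (κ + 1 / γ)) * Real.exp (q.1 * ℓ q.2))
      (Set.Ioi (0 : ℝ) ×ˢ (Set.univ : Set (EuclideanSpace ℝ (Fin p)))) :=
  cox_adaptive_catalytic_prior_proper_general p M X Y hY h0 α γ c1 hh0 hα hγ hc1 hnr ℓ hℓ κ hκ
end

section
/- If the synthetic covariates satisfy norm-recoverability and tau > 0, the catalytic-regularized objective F(beta) = -log PL(beta) + (tau/M) sum_{i=1}^M [exp(<X_i*,beta>) Y_i* h_0^+ - <X_i*,beta>] is coercive (F(beta) -> infinity as ||beta||_2 -> infinity), and therefore the catalytic-regularized estimator, the minimizer of F, exists. -/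
open Real Filter
open scoped RealInnerProductSpace BigOperators

/-- The objective function of the catalytic-regularized estimator. -/
noncomputable def creObjective (p n M : ℕ)
    (X : Fin n → EuclideanSpace ℝ (Fin p)) (δ : Fin n → ℝ)
    (R : Fin n → Finset (Fin n))
    (Xs : Fin M → EuclideanSpace ℝ (Fin p)) (Ys : Fin M → ℝ)
    (h0 τ : ℝ) (β : EuclideanSpace ℝ (Fin p)) : ℝ :=
  (-∑ i, δ i * (⟪X i, β⟫ - Real.log (∑ j ∈ R i, Real.exp ⟪X j, β⟫)))
    + (τ / (M : ℝ)) * ∑ i, (Real.exp ⟪Xs i, β⟫ * Ys i * h0 - ⟪Xs i, β⟫)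

/-!
Each factor of the partial likelihood is a probability, so `-log PL ≥ 0`. For `a > 0` the
function `t ↦ a eᵗ - t` dominates `|t|` up to the constant `2 / a`, so by norm-recoverability the
penalty grows at least like `τ c₁ ‖β‖`. Hence the objective is coercive, and being continuous on
a finite-dimensional space it attains its minimum.
-/

namespace Real

lemma le_log_sum_exp {ι : Type*} {s : Finset ι} (f : ι → ℝ) {i : ι} (hi : i ∈ s) :
    f i ≤ log (∑ j ∈ s, exp (f j)) := by
  rw [le_log_iff_exp_le (Finset.sum_pos (fun j _ => exp_pos _) ⟨i, hi⟩)]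
  exact Finset.single_le_sum (fun j _ => (exp_pos _).le) hi

lemma abs_sub_le_mul_exp_sub {a : ℝ} (ha : 0 < a) (t : ℝ) : |t| - 2 / a ≤ a * exp t - t := by
  rcases le_or_gt t 0 with ht | ht
  · rw [abs_of_nonpos ht]
    linarith [mul_pos ha (exp_pos t), div_pos two_pos ha]
  · rw [abs_of_pos ht]
    have hexp := mul_le_mul_of_nonneg_left (quadratic_le_exp_of_nonneg ht.le) ha.le
    -- `a t² / 2 ≥ 2t - 2/a` is the square `(a/2) (t - 2/a)² ≥ 0`
    have hsq : 0 ≤ a / 2 * (t - 2 / a) ^ 2 := by positivity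
    have hexpand : a / 2 * (t - 2 / a) ^ 2 = a * (t ^ 2 / 2) - 2 * t + 2 / a := by
      field_simp; ring
    nlinarith

end Real

lemma sum_mul_sub_log_sum_exp_nonpos {ι : Type*} [Fintype ι] {δ : ι → ℝ} (hδ : ∀ i, 0 ≤ δ i)
    {R : ι → Finset ι} (hR : ∀ i, i ∈ R i) (f : ι → ℝ) :
    ∑ i, δ i * (f i - log (∑ j ∈ R i, exp (f j))) ≤ 0 :=
  Finset.sum_nonpos fun i _ =>
    mul_nonpos_of_nonneg_of_nonpos (hδ i) (sub_nonpos.2 (le_log_sum_exp f (hR i)))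

lemma sum_abs_sub_le_sum_mul_exp_sub {ι : Type*} [Fintype ι] {a : ι → ℝ} (ha : ∀ i, 0 < a i)
    (t : ι → ℝ) : ∑ i, |t i| - ∑ i, 2 / a i ≤ ∑ i, (a i * exp (t i) - t i) := by
  rw [← Finset.sum_sub_distrib]
  exact Finset.sum_le_sum fun i _ => abs_sub_le_mul_exp_sub (ha i) (t i)

lemma tendsto_comap_norm_atTop_of_linear_le {E : Type*} [Norm E] {f : E → ℝ} {a b : ℝ}
    (ha : 0 < a) (hf : ∀ x, a * ‖x‖ - b ≤ f x) :
    Tendsto f (comap norm atTop) atTop :=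
  tendsto_atTop_mono hf <|
    (tendsto_atTop_add_const_right _ _ (tendsto_id.const_mul_atTop ha)).comp tendsto_comap

section CreObjective

variable {p n M : ℕ} {X : Fin n → EuclideanSpace ℝ (Fin p)} {δ : Fin n → ℝ}
  {R : Fin n → Finset (Fin n)} {Xs : Fin M → EuclideanSpace ℝ (Fin p)} {Ys : Fin M → ℝ}
  {h0 τ : ℝ}

lemma linear_le_creObjective (hδ : ∀ i, 0 ≤ δ i) (hR : ∀ i, i ∈ R i) (hYs : ∀ i, 0 < Ys i)
    (hh0 : 0 < h0) (hτ : 0 ≤ τ) {c1 : ℝ}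
    (hnr : ∀ β : EuclideanSpace ℝ (Fin p), c1 * ‖β‖ ≤ (1 / (M : ℝ)) * ∑ i, |⟪Xs i, β⟫|)
    (β : EuclideanSpace ℝ (Fin p)) :
    τ * c1 * ‖β‖ - τ / M * ∑ i, 2 / (Ys i * h0) ≤ creObjective p n M X δ R Xs Ys h0 τ β := by
  have hcox := sum_mul_sub_log_sum_exp_nonpos hδ hR fun i => ⟪X i, β⟫
  have hnrτ : τ * c1 * ‖β‖ ≤ τ / M * ∑ i, |⟪Xs i, β⟫| := by
    rw [mul_assoc, div_eq_mul_one_div, mul_assoc]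
    exact mul_le_mul_of_nonneg_left (hnr β) hτ
  have hpen := sum_abs_sub_le_sum_mul_exp_sub (fun i => mul_pos (hYs i) hh0) fun i => ⟪Xs i, β⟫
  unfold creObjective
  calc τ * c1 * ‖β‖ - τ / M * ∑ i, 2 / (Ys i * h0)
      ≤ τ / M * (∑ i, |⟪Xs i, β⟫| - ∑ i, 2 / (Ys i * h0)) := by
        rw [mul_sub]; linarith
    _ ≤ τ / M * ∑ i, (Ys i * h0 * exp ⟪Xs i, β⟫ - ⟪Xs i, β⟫) := by gcongr
    _ = τ / M * ∑ i, (exp ⟪Xs i, β⟫ * Ys i * h0 - ⟪Xs i, β⟫) := by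
        congr 1; exact Finset.sum_congr rfl fun i _ => by ring
    _ ≤ _ := by linarith

lemma continuous_creObjective (hR : ∀ i, i ∈ R i) :
    Continuous (creObjective p n M X δ R Xs Ys h0 τ) := by
  have hsum_ne (i : Fin n) (β : EuclideanSpace ℝ (Fin p)) : ∑ j ∈ R i, exp ⟪X j, β⟫ ≠ 0 :=
    (Finset.sum_pos (fun j _ => exp_pos _) ⟨i, hR i⟩).ne'
  unfold creObjective
  fun_prop (disch := exact hsum_ne _)

end CreObjective

theorem creObjective_coercive_and_min_exists_general (p n M : ℕ)
    (X : Fin n → EuclideanSpace ℝ (Fin p)) (Y : Fin n → ℝ) (δ : Fin n → ℝ)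
    (hδ : ∀ i, δ i = 0 ∨ δ i = 1)
    (R : Fin n → Finset (Fin n)) (hR : ∀ i j, j ∈ R i ↔ Y i ≤ Y j)
    (Xs : Fin M → EuclideanSpace ℝ (Fin p)) (Ys : Fin M → ℝ) (hYs : ∀ i, 0 < Ys i)
    (h0 τ c1 : ℝ) (hh0 : 0 < h0) (hτ : 0 < τ) (hc1 : 0 < c1)
    (hnr : ∀ β : EuclideanSpace ℝ (Fin p),
      c1 * ‖β‖ ≤ (1 / (M : ℝ)) * ∑ i, |⟪Xs i, β⟫|) :
    Filter.Tendsto (creObjective p n M X δ R Xs Ys h0 τ)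
      (Filter.comap (fun β : EuclideanSpace ℝ (Fin p) => ‖β‖) Filter.atTop) Filter.atTop ∧
    ∃ β₀ : EuclideanSpace ℝ (Fin p), ∀ β,
      creObjective p n M X δ R Xs Ys h0 τ β₀ ≤ creObjective p n M X δ R Xs Ys h0 τ β := by
  have hδ_nonneg (i : Fin n) : 0 ≤ δ i := by rcases hδ i with h | h <;> simp [h]
  have hR_self (i : Fin n) : i ∈ R i := (hR i i).2 le_rfl
  have hcoercive : Tendsto (creObjective p n M X δ R Xs Ys h0 τ) (comap norm atTop) atTop :=
    tendsto_comap_norm_atTop_of_linear_le (mul_pos hτ hc1)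
      (linear_le_creObjective hδ_nonneg hR_self hYs hh0 hτ.le hnr)
  exact ⟨hcoercive, (continuous_creObjective hR_self).exists_forall_le
    (hcoercive.mono_left (tendsto_iff_comap.mp tendsto_norm_cocompact_atTop))⟩

/-- Under norm-recoverability of the synthetic covariates and `τ > 0`, the
catalytic-regularized objective is coercive, hence the catalytic-regularized
estimator (a minimizer) exists. -/
theorem creObjective_coercive_and_min_exists (p n M : ℕ) (hM : 0 < M)
    (X : Fin n → EuclideanSpace ℝ (Fin p)) (Y : Fin n → ℝ) (δ : Fin n → ℝ)
    (hδ : ∀ i, δ i = 0 ∨ δ i = 1)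
    (R : Fin n → Finset (Fin n)) (hR : ∀ i j, j ∈ R i ↔ Y i ≤ Y j)
    (Xs : Fin M → EuclideanSpace ℝ (Fin p)) (Ys : Fin M → ℝ) (hYs : ∀ i, 0 < Ys i)
    (h0 τ c1 : ℝ) (hh0 : 0 < h0) (hτ : 0 < τ) (hc1 : 0 < c1)
    (hnr : ∀ β : EuclideanSpace ℝ (Fin p),
      c1 * ‖β‖ ≤ (1 / (M : ℝ)) * ∑ i, |⟪Xs i, β⟫|) :
    Filter.Tendsto (creObjective p n M X δ R Xs Ys h0 τ)
      (Filter.comap (fun β : EuclideanSpace ℝ (Fin p) => ‖β‖) Filter.atTop) Filter.atTop ∧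
    ∃ β₀ : EuclideanSpace ℝ (Fin p), ∀ β,
      creObjective p n M X δ R Xs Ys h0 τ β₀ ≤ creObjective p n M X δ R Xs Ys h0 τ β :=
  creObjective_coercive_and_min_exists_general p n M X Y δ hδ R hR Xs Ys hYs h0 τ c1 hh0 hτ hc1 hnr
end

section
/- Let pi(beta) proportional to exp(tau * ell(beta)) be the Cox catalytic prior with ell(beta) = (1/M) sum_i [log h_0^+ + <X_i*,beta> - exp(<X_i*,beta>) Y_i* h_0^+], and suppose norm-recoverability holds with constant c_1 > 0. Then for all beta with ||beta||_2 sufficiently large, ell(beta) <= kappa - c * ||beta||_2 for some tau-independent constant c > 0 depending only on the synthetic data; hence the unnormalized prior density decays at least exponentially in ||beta||_2. -/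
open Real
open scoped RealInnerProductSpace BigOperators

private lemma cox_key (a t : ℝ) (ha : 0 < a) :
    t - Real.exp t * a ≤ max (2*Real.log 2 - 2*Real.log a - 2) 0 - |t| := by
  have hkey : 2*t - (2*Real.log 2 - 2*Real.log a - 2) ≤ Real.exp t * a := by
    have h := Real.add_one_le_exp (t - Real.log (2/a))
    rw [Real.exp_sub, Real.exp_log (by positivity), Real.log_div (by norm_num) ha.ne'] at h
    have h2 : Real.exp t / (2/a) = Real.exp t * a / 2 := by
      field_simp
    rw [h2] at h
    linarith
  have hpos : 0 < Real.exp t * a := by positivity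
  have hD : 2*Real.log 2 - 2*Real.log a - 2 ≤ max (2*Real.log 2 - 2*Real.log a - 2) 0 :=
    le_max_left _ _
  have h0 : (0:ℝ) ≤ max (2*Real.log 2 - 2*Real.log a - 2) 0 := le_max_right _ _
  rcases le_or_gt 0 t with ht | ht
  · rw [abs_of_nonneg ht]; linarith
  · rw [abs_of_neg ht]; linarith

/-- Exponential tail decay of the Cox catalytic prior: under norm-recoverability there is
a constant `c > 0`, depending only on the synthetic data, such that
`ℓ(β) ≤ κ - c ‖β‖` for all `β` with sufficiently large norm. -/
theorem cox_catalytic_prior_exponential_tail (p M : ℕ) (hM : 0 < M)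
    (X : Fin M → EuclideanSpace ℝ (Fin p)) (Y : Fin M → ℝ) (hY : ∀ i, 0 < Y i)
    (h0 τ c1 : ℝ) (hh0 : 0 < h0) (hτ : 0 < τ) (hc1 : 0 < c1)
    (hnr : ∀ β : EuclideanSpace ℝ (Fin p),
      c1 * ‖β‖ ≤ (1 / (M : ℝ)) * ∑ i, |⟪X i, β⟫|)
    (ℓ : EuclideanSpace ℝ (Fin p) → ℝ)
    (hℓ : ∀ β, ℓ β =
      (1 / (M : ℝ)) * ∑ i, (Real.log h0 + ⟪X i, β⟫ - Real.exp ⟪X i, β⟫ * Y i * h0))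
    (κ : ℝ) (hκ : κ = ⨆ β : EuclideanSpace ℝ (Fin p), ℓ β) :
    ∃ c : ℝ, 0 < c ∧ ∃ R : ℝ, ∀ β : EuclideanSpace ℝ (Fin p),
      R ≤ ‖β‖ → ℓ β ≤ κ - c * ‖β‖ := by
  set B : ℝ := (1 / (M : ℝ)) * ∑ i,
      (Real.log h0 + max (2*Real.log 2 - 2*Real.log (Y i * h0) - 2) 0) with hB
  have hMpos : (0:ℝ) < (M:ℝ) := Nat.cast_pos.mpr hM
  have hMinv : (0:ℝ) ≤ 1 / (M:ℝ) := by positivity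
  -- main pointwise bound
  have hmain : ∀ β : EuclideanSpace ℝ (Fin p), ℓ β ≤ B - c1 * ‖β‖ := by
    intro β
    have hsum : ∑ i, (Real.log h0 + ⟪X i, β⟫ - Real.exp ⟪X i, β⟫ * Y i * h0)
        ≤ ∑ i, (Real.log h0 + max (2*Real.log 2 - 2*Real.log (Y i * h0) - 2) 0
            - |⟪X i, β⟫|) := by
      apply Finset.sum_le_sum
      intro i _
      have := cox_key (Y i * h0) ⟪X i, β⟫ (mul_pos (hY i) hh0)
      have hassoc : Real.exp ⟪X i, β⟫ * Y i * h0 = Real.exp ⟪X i, β⟫ * (Y i * h0) := by ring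
      rw [hassoc]
      linarith
    have h1 : ℓ β ≤ (1 / (M : ℝ)) * ∑ i,
        (Real.log h0 + max (2*Real.log 2 - 2*Real.log (Y i * h0) - 2) 0 - |⟪X i, β⟫|) := by
      rw [hℓ β]
      exact mul_le_mul_of_nonneg_left hsum hMinv
    have h2 : (1 / (M : ℝ)) * ∑ i,
        (Real.log h0 + max (2*Real.log 2 - 2*Real.log (Y i * h0) - 2) 0 - |⟪X i, β⟫|)
        = B - (1 / (M : ℝ)) * ∑ i, |⟪X i, β⟫| := by
      rw [hB, Finset.sum_sub_distrib]
      ring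
    have h3 := hnr β
    linarith
  -- κ ≥ ℓ 0
  have hbdd : BddAbove (Set.range ℓ) := by
    refine ⟨B, ?_⟩
    rintro x ⟨β, rfl⟩
    have := hmain β
    have : c1 * ‖β‖ ≥ 0 := by positivity
    linarith [hmain β]
  have hκge : ℓ 0 ≤ κ := by
    rw [hκ]
    exact le_ciSup hbdd 0
  refine ⟨c1 / 2, by positivity, max 0 (2 * (B - κ) / c1), ?_⟩
  intro β hβ
  have hβ1 : 2 * (B - κ) / c1 ≤ ‖β‖ := le_trans (le_max_right _ _) hβ
  have hβ2 : (0:ℝ) ≤ ‖β‖ := norm_nonneg _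
  have : 2 * (B - κ) ≤ c1 * ‖β‖ := by
    rw [div_le_iff₀ hc1] at hβ1
    linarith
  have := hmain β
  nlinarith
end

section
/- In the weighted mixture partial likelihood, as tau -> 0+ the objective log PtildeL_tau(beta) converges, uniformly on compact subsets of R^p, to the log partial likelihood based solely on the observed data; consequently if the observed-data log partial likelihood has a unique maximizer beta_hat_MPLE and the maximizers beta_hat_{WM,tau} stay in a fixed compact set, then beta_hat_{WM,tau} -> beta_hat_MPLE as tau -> 0+. -/
open Real Filter Topology
open scoped RealInnerProductSpace BigOperators

open Set Function

/-!
The defining formula of `log P̃L_τ(β)` still makes sense at `τ = 0`, where the synthetic units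
drop out and it becomes the observed-data log partial likelihood. It is jointly continuous in
`(τ, β)` on `[0, ∞) × ℝᵖ`: an observed unit lies in its own risk set, so its log-sum stays
positive, while a synthetic unit contributes `s log (A + s B)` with `s = τ/M`, `A ≥ 0`, `B > 0`,
which is squeezed between `s log s + s log B` and `s (A + s B)`. Heine–Cantor on `[0, 1] × K` then
gives uniform convergence on compacts, and the usual argmax-consistency argument (a strict
maximum of a continuous function on a compact set is separated from the values outside any
neighbourhood) gives convergence of the maximizers.
-/

theorem tendstoUniformlyOn_nhdsGT_of_continuousOn {β γ : Type*} [UniformSpace β]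
    [UniformSpace γ] {F : ℝ → β → γ} {a : ℝ} {K : Set β} (hK : IsCompact K)
    (hF : ContinuousOn ↿F (Ici a ×ˢ K)) : TendstoUniformlyOn F (F a) (𝓝[>] a) K := by
  have hunif : TendstoUniformlyOn F (F a) (𝓝[Icc a (a + 1)] a) K :=
    ((isCompact_Icc.prod hK).uniformContinuousOn_of_continuous
      (hF.mono (prod_mono Icc_subset_Ici_self subset_rfl))).tendstoUniformlyOn
      (left_mem_Icc.2 (by linarith))
  have hle : 𝓝[>] a ≤ 𝓝[Icc a (a + 1)] a := by
    rw [← nhdsWithin_Ioc_eq_nhdsGT (lt_add_one a)]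
    exact nhdsWithin_mono _ Ioc_subset_Icc_self
  exact fun u hu => (hunif u hu).filter_mono hle

theorem TendstoUniformlyOn.tendsto_of_maximizers {X ι : Type*} [TopologicalSpace X]
    {l : Filter ι} {F : ι → X → ℝ} {f : X → ℝ} {K : Set X}
    (hFf : TendstoUniformlyOn F f l K) (hK : IsCompact K) (hf : ContinuousOn f K)
    {x₀ : X} (hx₀ : x₀ ∈ K) (hmax : ∀ y ∈ K, y ≠ x₀ → f y < f x₀) {x : ι → X}
    (hxK : ∀ᶠ i in l, x i ∈ K) (hxmax : ∀ᶠ i in l, F i x₀ ≤ F i (x i)) :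
    Tendsto x l (𝓝 x₀) := by
  refine (nhds_basis_opens x₀).tendsto_right_iff.2 fun U ⟨hx₀U, hU⟩ => ?_
  obtain ⟨η, hη, hgap⟩ : ∃ η > 0, ∀ y ∈ K \ U, f y + 2 * η ≤ f x₀ := by
    rcases (K \ U).eq_empty_or_nonempty with hC | hC
    · exact ⟨1, one_pos, by simp [hC]⟩
    obtain ⟨y₀, hy₀, hy₀max⟩ := (hK.diff hU).exists_isMaxOn hC (hf.mono sdiff_subset)
    have hlt : f y₀ < f x₀ := hmax y₀ hy₀.1 fun h => hy₀.2 (h ▸ hx₀U)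
    exact ⟨(f x₀ - f y₀) / 2, by linarith,
      fun y hy => by linarith [isMaxOn_iff.1 hy₀max y hy]⟩
  filter_upwards [Metric.tendstoUniformlyOn_iff.1 hFf η hη, hxK, hxmax] with i hclose hxiK hxi
  by_contra hxiU
  have h₁ := hclose _ hxiK
  have h₂ := hclose x₀ hx₀
  rw [Real.dist_eq, abs_sub_lt_iff] at h₁ h₂
  linarith [hgap (x i) ⟨hxiK, hxiU⟩]

theorem continuousOn_mul_log_add_mul {X : Type*} [TopologicalSpace X] {a b : X → ℝ}
    (ha : Continuous a) (hb : Continuous b) (ha0 : ∀ x, 0 ≤ a x) (hb0 : ∀ x, 0 < b x) :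
    ContinuousOn (fun q : ℝ × X => q.1 * log (a q.2 + q.1 * b q.2)) (Ici 0 ×ˢ univ) := by
  rintro ⟨s, x⟩ ⟨hs : 0 ≤ s, -⟩
  rcases hs.eq_or_lt with rfl | hs
  · have hlower : Continuous fun q : ℝ × X => q.1 * log q.1 + q.1 * log (b q.2) :=
      (continuous_mul_log.comp continuous_fst).add
        (continuous_fst.mul ((hb.comp continuous_snd).log fun q => (hb0 q.2).ne'))
    have hupper : Continuous fun q : ℝ × X => q.1 * (a q.2 + q.1 * b q.2) := by fun_prop
    refine tendsto_of_tendsto_of_tendsto_of_le_of_le'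
      (by simpa using (hlower.tendsto (0, x)).mono_left nhdsWithin_le_nhds)
      (by simpa using (hupper.tendsto (0, x)).mono_left nhdsWithin_le_nhds)
      ?_ ?_ <;> filter_upwards [self_mem_nhdsWithin] <;> rintro ⟨t, y⟩ ⟨ht : 0 ≤ t, -⟩
    · rcases ht.eq_or_lt with rfl | ht
      · simp
      rw [← mul_add, ← log_mul ht.ne' (hb0 y).ne']
      exact mul_le_mul_of_nonneg_left
        (log_le_log (mul_pos ht (hb0 y)) (le_add_of_nonneg_left (ha0 y))) ht.le
    · exact mul_le_mul_of_nonneg_left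
        (log_le_self (add_nonneg (ha0 y) (mul_nonneg ht (hb0 y).le))) ht
  · refine (continuous_fst.continuousAt.mul
      (ContinuousAt.log (by fun_prop) ?_)).continuousWithinAt
    exact (add_pos_of_nonneg_of_pos (ha0 x) (mul_pos hs (hb0 x))).ne'

noncomputable section MixtureLikelihood

variable {E : Type*} [NormedAddCommGroup E] [InnerProductSpace ℝ E] {n M : ℕ}

def mixtureWeight (n M : ℕ) (τ : ℝ) (i : Fin (n + M)) : ℝ :=
  if i.1 < n then 1 else τ / M

def mixtureLogPL (Z : Fin (n + M) → E) (δ : Fin (n + M) → ℝ)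
    (R : Fin (n + M) → Finset (Fin (n + M))) (τ : ℝ) (β : E) : ℝ :=
  ∑ i, mixtureWeight n M τ i * δ i *
    (⟪Z i, β⟫ - log (∑ j ∈ R i, mixtureWeight n M τ j * exp ⟪Z j, β⟫))

def observedLogPL (Z : Fin (n + M) → E) (δ : Fin (n + M) → ℝ)
    (R : Fin (n + M) → Finset (Fin (n + M))) (β : E) : ℝ :=
  ∑ i ∈ Finset.univ.filter (fun i : Fin (n + M) => i.1 < n),
    δ i * (⟪Z i, β⟫ - log (∑ j ∈ (R i).filter (fun j => j.1 < n), exp ⟪Z j, β⟫))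

variable (Z : Fin (n + M) → E) (δ : Fin (n + M) → ℝ)
  (R : Fin (n + M) → Finset (Fin (n + M)))

theorem mixtureLogPL_zero : mixtureLogPL Z δ R 0 = observedLogPL Z δ R := by
  funext β
  simp [mixtureLogPL, observedLogPL, mixtureWeight, Finset.sum_filter, ite_mul]

theorem sum_mixtureWeight_mul (s : Finset (Fin (n + M))) (τ : ℝ) (e : Fin (n + M) → ℝ) :
    ∑ j ∈ s, mixtureWeight n M τ j * e j =
      ∑ j ∈ s.filter (fun j => j.1 < n), e j +
        τ / M * ∑ j ∈ s.filter (fun j => ¬ j.1 < n), e j := by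
  rw [← Finset.sum_filter_add_sum_filter_not s (fun j => j.1 < n), Finset.mul_sum]
  congr 1 <;> refine Finset.sum_congr rfl fun j hj => ?_ <;>
    simp [mixtureWeight, (Finset.mem_filter.1 hj).2]

theorem continuousOn_uncurry_mixtureLogPL (hR : ∀ i, i ∈ R i) :
    ContinuousOn (uncurry (mixtureLogPL Z δ R)) (Ici 0 ×ˢ univ) := by
  set A : Fin (n + M) → E → ℝ := fun i β =>
    ∑ j ∈ (R i).filter (fun j => j.1 < n), exp ⟪Z j, β⟫
  set B : Fin (n + M) → E → ℝ := fun i β =>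
    ∑ j ∈ (R i).filter (fun j => ¬ j.1 < n), exp ⟪Z j, β⟫
  have hA : ∀ i, Continuous (A i) := fun i => by fun_prop
  have hB : ∀ i, Continuous (B i) := fun i => by fun_prop
  have hA0 : ∀ i β, 0 ≤ A i β := fun i β => Finset.sum_nonneg fun j _ => (exp_pos _).le
  have hB0 : ∀ i β, 0 ≤ B i β := fun i β => Finset.sum_nonneg fun j _ => (exp_pos _).le
  have hweight : MapsTo (fun q : ℝ × E => (q.1 / M, q.2)) (Ici 0 ×ˢ univ) (Ici 0 ×ˢ univ) :=
    fun q hq => ⟨mem_Ici.2 (div_nonneg hq.1 M.cast_nonneg), trivial⟩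
  unfold uncurry mixtureLogPL
  refine continuousOn_finsetSum _ fun i _ => ?_
  simp only [sum_mixtureWeight_mul]
  by_cases hi : i.1 < n
  · have hApos : ∀ β, 0 < A i β := fun β =>
      Finset.sum_pos (fun j _ => exp_pos _) ⟨i, Finset.mem_filter.2 ⟨hR i, hi⟩⟩
    simp only [mixtureWeight, if_pos hi, one_mul]
    have hinner : Continuous fun q : ℝ × E => ⟪Z i, q.2⟫ := by fun_prop
    refine continuousOn_const.mul (hinner.continuousOn.sub
      (ContinuousOn.log (by fun_prop) fun q hq => ?_))
    exact (add_pos_of_pos_of_nonneg (hApos q.2)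
      (mul_nonneg (div_nonneg hq.1 M.cast_nonneg) (hB0 i q.2))).ne'
  · have hBpos : ∀ β, 0 < B i β := fun β =>
      Finset.sum_pos (fun j _ => exp_pos _) ⟨i, Finset.mem_filter.2 ⟨hR i, hi⟩⟩
    have hlog := (continuousOn_mul_log_add_mul (hA i) (hB i) (hA0 i) hBpos).comp
      (by fun_prop : Continuous fun q : ℝ × E => (q.1 / M, q.2)).continuousOn hweight
    have hinner : Continuous fun q : ℝ × E => q.1 / M * ⟪Z i, q.2⟫ := by fun_prop
    refine (((continuousOn_const (c := δ i)).mul hinner.continuousOn).sub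
      ((continuousOn_const (c := δ i)).mul hlog)).congr fun q _ => ?_
    simp only [mixtureWeight, if_neg hi, Pi.mul_apply, Pi.sub_apply, comp_apply, A, B]
    ring

end MixtureLikelihood

theorem weighted_mixture_small_tau_limit_general (p n M : ℕ)
    (Z : Fin (n + M) → EuclideanSpace ℝ (Fin p)) (Yt : Fin (n + M) → ℝ)
    (δ : Fin (n + M) → ℝ)
    (R : Fin (n + M) → Finset (Fin (n + M))) (hR : ∀ i j, j ∈ R i ↔ Yt i ≤ Yt j)
    (L : ℝ → EuclideanSpace ℝ (Fin p) → ℝ)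
    (hL : ∀ τ β, L τ β = ∑ i : Fin (n + M), (if i.1 < n then 1 else τ / (M : ℝ)) * δ i *
      (⟪Z i, β⟫ - Real.log (∑ j ∈ R i,
        (if j.1 < n then 1 else τ / (M : ℝ)) * Real.exp ⟪Z j, β⟫)))
    (L0 : EuclideanSpace ℝ (Fin p) → ℝ)
    (hL0 : ∀ β, L0 β = ∑ i ∈ Finset.univ.filter (fun i : Fin (n + M) => i.1 < n),
      δ i * (⟪Z i, β⟫ - Real.log (∑ j ∈ (R i).filter (fun j => j.1 < n),
        Real.exp ⟪Z j, β⟫))) :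
    (∀ K : Set (EuclideanSpace ℝ (Fin p)), IsCompact K →
      TendstoUniformlyOn (fun τ => L τ) L0 (nhdsWithin (0 : ℝ) (Set.Ioi 0)) K) ∧
    (∀ βM : EuclideanSpace ℝ (Fin p), (∀ β, β ≠ βM → L0 β < L0 βM) →
      ∀ bhat : ℝ → EuclideanSpace ℝ (Fin p),
        (∀ τ : ℝ, 0 < τ → ∀ β, L τ β ≤ L τ (bhat τ)) →
        (∃ K : Set (EuclideanSpace ℝ (Fin p)), IsCompact K ∧ ∀ τ : ℝ, 0 < τ → bhat τ ∈ K) →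
        Filter.Tendsto bhat (nhdsWithin (0 : ℝ) (Set.Ioi 0)) (nhds βM)) := by
  obtain rfl : L = mixtureLogPL Z δ R := funext fun τ => funext (hL τ)
  obtain rfl : L0 = observedLogPL Z δ R := funext hL0
  have hcont := continuousOn_uncurry_mixtureLogPL Z δ R fun i => (hR i i).2 le_rfl
  have hunif : ∀ K, IsCompact K →
      TendstoUniformlyOn (mixtureLogPL Z δ R) (observedLogPL Z δ R) (𝓝[>] 0) K := by
    intro K hK
    rw [← mixtureLogPL_zero]
    exact tendstoUniformlyOn_nhdsGT_of_continuousOn hK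
      (hcont.mono (prod_mono subset_rfl (subset_univ K)))
  have hL0cont : Continuous (observedLogPL Z δ R) := by
    rw [← mixtureLogPL_zero]
    exact hcont.comp_continuous (continuous_const.prodMk continuous_id)
      fun _ => ⟨self_mem_Ici, trivial⟩
  refine ⟨hunif, fun βM hmax bhat hbhat ⟨K, hK, hbK⟩ => ?_⟩
  exact (hunif _ (hK.insert βM)).tendsto_of_maximizers (hK.insert βM) hL0cont.continuousOn
    (mem_insert _ _) (fun β _ hβ => hmax β hβ)
    (eventually_nhdsWithin_of_forall fun τ hτ => mem_insert_of_mem _ (hbK τ hτ))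
    (eventually_nhdsWithin_of_forall fun τ hτ => hbhat τ hτ βM)

/-- As `τ → 0⁺`, the weighted-mixture log partial likelihood converges uniformly on
compact sets to the observed-data log partial likelihood; consequently, if the latter has
a unique maximizer and the weighted-mixture maximizers stay in a fixed compact set, they
converge to the MPLE. -/
theorem weighted_mixture_small_tau_limit (p n M : ℕ) (hn : 0 < n) (hM : 0 < M)
    (Z : Fin (n + M) → EuclideanSpace ℝ (Fin p)) (Yt : Fin (n + M) → ℝ)
    (hYt : ∀ i, 0 < Yt i) (δ : Fin (n + M) → ℝ)
    (hδ : ∀ i, δ i = 0 ∨ δ i = 1) (hδsyn : ∀ i : Fin (n + M), n ≤ i.1 → δ i = 1)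
    (R : Fin (n + M) → Finset (Fin (n + M))) (hR : ∀ i j, j ∈ R i ↔ Yt i ≤ Yt j)
    (L : ℝ → EuclideanSpace ℝ (Fin p) → ℝ)
    (hL : ∀ τ β, L τ β = ∑ i : Fin (n + M), (if i.1 < n then 1 else τ / (M : ℝ)) * δ i *
      (⟪Z i, β⟫ - Real.log (∑ j ∈ R i,
        (if j.1 < n then 1 else τ / (M : ℝ)) * Real.exp ⟪Z j, β⟫)))
    (L0 : EuclideanSpace ℝ (Fin p) → ℝ)
    (hL0 : ∀ β, L0 β = ∑ i ∈ Finset.univ.filter (fun i : Fin (n + M) => i.1 < n),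
      δ i * (⟪Z i, β⟫ - Real.log (∑ j ∈ (R i).filter (fun j => j.1 < n),
        Real.exp ⟪Z j, β⟫))) :
    (∀ K : Set (EuclideanSpace ℝ (Fin p)), IsCompact K →
      TendstoUniformlyOn (fun τ => L τ) L0 (nhdsWithin (0 : ℝ) (Set.Ioi 0)) K) ∧
    (∀ βM : EuclideanSpace ℝ (Fin p), (∀ β, β ≠ βM → L0 β < L0 βM) →
      ∀ bhat : ℝ → EuclideanSpace ℝ (Fin p),
        (∀ τ : ℝ, 0 < τ → ∀ β, L τ β ≤ L τ (bhat τ)) →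
        (∃ K : Set (EuclideanSpace ℝ (Fin p)), IsCompact K ∧ ∀ τ : ℝ, 0 < τ → bhat τ ∈ K) →
        Filter.Tendsto bhat (nhdsWithin (0 : ℝ) (Set.Ioi 0)) (nhds βM)) :=
  weighted_mixture_small_tau_limit_general p n M Z Yt δ R hR L hL L0 hL0
end
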